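/- arXiv:2002.02766 — 2 statements merged into one kernel-verified Lean document; each statement's English description precedes it below -/
import Mathlib

section
/- Uniqueness for the ε-Milne problem with geometric correction (uniqueness part of Theorem 'Milne theorem 1'): There exists ε₀ ∈ (0,1), depending only on R₁, R₂ and n, such that for every ε ∈ (0, ε₀], the only classical solution of the ε-Milne problem with geometric correction with in-flow data h ≡ 0 and source S ≡ 0 is the zero function f ≡ 0 on D. -/
noncomputable section

open Real Set MeasureTheory

namespace MilneStmt

/-- The boundary-layer thickness `L = ε^(-n)`. -/
def layerL (ε n : ℝ) : ℝ := ε ^ (-n)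

/-- The geometric force `F(η,ψ)`. -/
def force (R₁ R₂ ε η ψ : ℝ) : ℝ :=
  -ε * (Real.sin ψ ^ 2 / (R₁ - ε * η) + Real.cos ψ ^ 2 / (R₂ - ε * η))

/-- The domain `D = [0,L] × [-π/2, π/2] × [-π, π]` of the variables `(η, φ, ψ)`. -/
def milneDomain (L : ℝ) : Set (ℝ × ℝ × ℝ) :=
  Icc (0 : ℝ) L ×ˢ Icc (-(π / 2)) (π / 2) ×ˢ Icc (-π) π

/-- The in-flow set `{(φ,ψ) : sin φ > 0, ψ ∈ [-π,π]}` (with `φ` in the velocity range). -/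
def inflowSet : Set (ℝ × ℝ) :=
  {q | 0 < Real.sin q.1 ∧ q.1 ∈ Icc (-(π / 2)) (π / 2) ∧ q.2 ∈ Icc (-π) π}

/-- The angular average `f̄(η)`. -/
def angAvg (f : ℝ × ℝ × ℝ → ℝ) (η : ℝ) : ℝ :=
  (1 / (4 * π)) * ∫ ψ in (-π)..π, ∫ φ in (-(π / 2))..(π / 2), f (η, φ, ψ) * Real.cos φ

/-- Partial derivative in `η`. -/
def dEta (g : ℝ × ℝ × ℝ → ℝ) (p : ℝ × ℝ × ℝ) : ℝ :=
  deriv (fun t => g (t, p.2.1, p.2.2)) p.1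

/-- Partial derivative in `φ`. -/
def dPhi (g : ℝ × ℝ × ℝ → ℝ) (p : ℝ × ℝ × ℝ) : ℝ :=
  deriv (fun t => g (p.1, t, p.2.2)) p.2.1

/-- Partial derivative in `ψ`. -/
def dPsi (g : ℝ × ℝ × ℝ → ℝ) (p : ℝ × ℝ × ℝ) : ℝ :=
  deriv (fun t => g (p.1, p.2.1, t)) p.2.2

/-- A classical solution of the ε-Milne problem with geometric correction,
with in-flow data `h` and source `S`. -/
structure IsMilneSolution (R₁ R₂ ε n : ℝ) (h : ℝ → ℝ → ℝ) (S : ℝ × ℝ × ℝ → ℝ)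
    (f : ℝ × ℝ × ℝ → ℝ) : Prop where
  smooth : ContDiffOn ℝ 1 f (milneDomain (layerL ε n))
  eqn : ∀ p ∈ interior (milneDomain (layerL ε n)),
    Real.sin p.2.1 * dEta f p + force R₁ R₂ ε p.1 p.2.2 * Real.cos p.2.1 * dPhi f p
      + f p - angAvg f p.1 = S p
  inflow : ∀ q ∈ inflowSet, f (0, q.1, q.2) = h q.1 q.2
  reflect : ∀ φ ψ : ℝ, f (layerL ε n, φ, ψ) = f (layerL ε n, -φ, ψ)

/-- The weighted `L²` norm on `D`. -/
def l2Norm (L : ℝ) (g : ℝ × ℝ × ℝ → ℝ) : ℝ :=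
  Real.sqrt (∫ η in (0 : ℝ)..L, ∫ ψ in (-π)..π, ∫ φ in (-(π / 2))..(π / 2),
    g (η, φ, ψ) ^ 2 * Real.cos φ)

/-- The `L^∞` norm (sup over `D`). -/
def linfNorm (L : ℝ) (g : ℝ × ℝ × ℝ → ℝ) : ℝ :=
  ⨆ p ∈ milneDomain L, |g p|

/-- The `L^∞` norm over the in-flow boundary. -/
def inflowLinf (g : ℝ → ℝ → ℝ) : ℝ :=
  ⨆ q ∈ inflowSet, |g q.1 q.2|

/-- The limit value `f_L = (3/(4π)) ∫∫ f(L,φ,ψ) sin²φ cos φ dφ dψ`. -/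
def limitValue (L : ℝ) (f : ℝ × ℝ × ℝ → ℝ) : ℝ :=
  (3 / (4 * π)) * ∫ ψ in (-π)..π, ∫ φ in (-(π / 2))..(π / 2),
    f (L, φ, ψ) * Real.sin φ ^ 2 * Real.cos φ

/-- The data bounds with constants `K` and `M` for in-flow data `h` and source `S`. -/
structure DataBounds (K M L : ℝ) (h : ℝ → ℝ → ℝ) (S : ℝ × ℝ × ℝ → ℝ) : Prop where
  hSmooth : ContDiffOn ℝ 1 (fun q : ℝ × ℝ => h q.1 q.2) inflowSet
  hBound : ∀ q ∈ inflowSet,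
    |h q.1 q.2| + |deriv (fun t => h t q.2) q.1| + |deriv (fun t => h q.1 t) q.2| ≤ M
  sSmooth : ContDiffOn ℝ 1 S (milneDomain L)
  sBound : ∀ p ∈ milneDomain L,
    Real.exp (K * p.1) * (|S p| + |dEta S p| + |dPhi S p| + |dPsi S p|) ≤ M


/-!
Maximum principle. By continuity the equation holds on all of `D` once the partial derivatives
are taken within `D`; this needs `F` to be continuous, i.e. `ε η < R_min` on `[0, L]`, which is
what the smallness of `ε` buys. Suppose `f` has a positive maximum `M` at `p`. There the
`φ`-transport term vanishes (either `cos φ = 0` or `∂_φ f = 0`) and the `η`-transport term is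
nonnegative: the in-flow condition rules out `sin φ > 0` at `η = 0`, and specular reflection lets
us take `φ ≥ 0` at `η = L`. Hence `M = f(p) ≤ f̄(η_p) ≤ M`, so `f ≡ M` on the slice `η = η_p`.
On the ray `φ = π/2, ψ = 0` the equation reads `u' = f̄ - u ≤ M - u` with `u(0) = 0`, so
`e^η (M - u)` is nondecreasing and stays positive, contradicting `u(η_p) = M`. Applying this to
`-f` as well gives `f = 0`.
-/

universe u v

theorem _root_.ContinuousOn.exists_continuous_eqOn {X : Type u} {Y : Type v} [TopologicalSpace X]
    [NormalSpace X] [TopologicalSpace Y] [TietzeExtension.{u, v} Y] {s : Set X} {f : X → Y}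
    (hs : IsClosed s) (hf : ContinuousOn f s) : ∃ g : X → Y, Continuous g ∧ EqOn g f s := by
  obtain ⟨g, hg⟩ := ContinuousMap.exists_restrict_eq hs ⟨_, hf.domRestrict⟩
  exact ⟨g, g.continuous, fun x hx => DFunLike.congr_fun hg ⟨x, hx⟩⟩

theorem _root_.IsMaxOn.fderivWithin_sub_nonpos {E : Type*} [NormedAddCommGroup E]
    [NormedSpace ℝ E] {f : E → ℝ} {s : Set E} {a x : E} (hs : Convex ℝ s) (ha : a ∈ s)
    (hx : x ∈ s) (hmax : IsMaxOn f s a) : fderivWithin ℝ f s a (x - a) ≤ 0 :=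
  hmax.localize.fderivWithin_nonpos
    (sub_mem_posTangentConeAt_of_segment_subset (hs.segment_subset ha hx))

theorem lt_of_hasDerivAt_le_sub {u u' : ℝ → ℝ} {a b M : ℝ} (hu : ContinuousOn u (Icc a b))
    (hderiv : ∀ s ∈ Ioo a b, HasDerivAt u (u' s) s) (hle : ∀ s ∈ Ioo a b, u' s ≤ M - u s)
    (ha : u a < M) : ∀ s ∈ Icc a b, u s < M := by
  have hmono : MonotoneOn (fun s => exp s * (M - u s)) (Icc a b) := by
    have hderiv' : ∀ s ∈ Ioo a b,
        HasDerivAt (fun s => exp s * (M - u s)) (exp s * (M - u s - u' s)) s := fun s hs =>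
      ((hasDerivAt_exp s).mul ((hasDerivAt_const s M).sub (hderiv s hs))).congr_deriv
        (by simp only [Pi.sub_apply]; ring)
    refine monotoneOn_of_deriv_nonneg (convex_Icc a b)
      (continuous_exp.continuousOn.mul (continuousOn_const.sub hu)) ?_ ?_
    · rw [interior_Icc]
      exact fun s hs => (hderiv' s hs).differentiableAt.differentiableWithinAt
    · rw [interior_Icc]
      intro s hs
      rw [(hderiv' s hs).deriv]
      exact mul_nonneg (exp_pos s).le (by linarith [hle s hs])
  intro s hs
  have hexp : exp a * (M - u a) ≤ exp s * (M - u s) := hmono ⟨le_rfl, hs.1.trans hs.2⟩ hs hs.1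
  have : 0 < exp s * (M - u s) := (mul_pos (exp_pos a) (by linarith)).trans_le hexp
  linarith [(pos_iff_pos_of_mul_pos this).1 (exp_pos s)]

section Domain

variable {L : ℝ}

theorem isCompact_milneDomain : IsCompact (milneDomain L) :=
  isCompact_Icc.prod (isCompact_Icc.prod isCompact_Icc)

theorem convex_milneDomain : Convex ℝ (milneDomain L) :=
  (convex_Icc _ _).prod ((convex_Icc _ _).prod (convex_Icc _ _))

theorem interior_milneDomain :
    interior (milneDomain L) = Ioo 0 L ×ˢ Ioo (-(π / 2)) (π / 2) ×ˢ Ioo (-π) π := by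
  simp only [milneDomain, interior_prod_eq, interior_Icc]

theorem closure_interior_milneDomain (hL : 0 < L) :
    closure (interior (milneDomain L)) = milneDomain L := by
  rw [interior_milneDomain, closure_prod_eq, closure_prod_eq, closure_Ioo hL.ne,
    closure_Ioo (by linarith [pi_pos]), closure_Ioo (by linarith [pi_pos]), milneDomain]

theorem uniqueDiffOn_milneDomain (hL : 0 < L) : UniqueDiffOn ℝ (milneDomain L) :=
  (uniqueDiffOn_Icc hL).prod
    ((uniqueDiffOn_Icc (by linarith [pi_pos])).prod (uniqueDiffOn_Icc (by linarith [pi_pos])))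

end Domain

section Average

variable {f g g₁ g₂ : ℝ × ℝ × ℝ → ℝ} {L M η : ℝ}

theorem continuous_angularIntegral (hg : Continuous g) :
    Continuous fun q : ℝ × ℝ => ∫ φ in (-(π / 2))..(π / 2), g (q.1, φ, q.2) * cos φ :=
  intervalIntegral.continuous_parametric_intervalIntegral_of_continuous'
    (f := fun (q : ℝ × ℝ) (φ : ℝ) => g (q.1, φ, q.2) * cos φ) (by fun_prop) _ _

theorem continuous_angAvg (hg : Continuous g) : Continuous (angAvg g) :=
  continuous_const.mul <| intervalIntegral.continuous_parametric_intervalIntegral_of_continuous'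
    (continuous_angularIntegral hg) _ _

theorem angAvg_const (M η : ℝ) : angAvg (fun _ => M) η = M := by
  simp only [angAvg, intervalIntegral.integral_const_mul, integral_cos, sin_neg, sin_pi_div_two,
    intervalIntegral.integral_const, smul_eq_mul]
  field_simp
  ring

theorem angAvg_mono (hg₁ : Continuous g₁) (hg₂ : Continuous g₂)
    (hle : ∀ φ ∈ Icc (-(π / 2)) (π / 2), ∀ ψ ∈ Icc (-π) π, g₁ (η, φ, ψ) ≤ g₂ (η, φ, ψ)) :
    angAvg g₁ η ≤ angAvg g₂ η := by
  have hπ := pi_pos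
  refine mul_le_mul_of_nonneg_left ?_ (by positivity)
  refine intervalIntegral.integral_mono_on (by linarith)
    (((continuous_angularIntegral hg₁).comp (Continuous.prodMk_right η)).intervalIntegrable _ _)
    (((continuous_angularIntegral hg₂).comp (Continuous.prodMk_right η)).intervalIntegrable _ _)
    fun ψ hψ => ?_
  refine intervalIntegral.integral_mono_on (by linarith)
    (Continuous.intervalIntegrable (by fun_prop) _ _)
    (Continuous.intervalIntegrable (by fun_prop) _ _)
    fun φ hφ => ?_
  exact mul_le_mul_of_nonneg_right (hle φ hφ ψ hψ) (cos_nonneg_of_mem_Icc hφ)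

theorem angAvg_lt_angAvg (hg₁ : Continuous g₁) (hg₂ : Continuous g₂)
    (hle : ∀ φ ∈ Icc (-(π / 2)) (π / 2), ∀ ψ ∈ Icc (-π) π, g₁ (η, φ, ψ) ≤ g₂ (η, φ, ψ))
    (hlt : ∃ φ ∈ Ioo (-(π / 2)) (π / 2), ∃ ψ ∈ Icc (-π) π, g₁ (η, φ, ψ) < g₂ (η, φ, ψ)) :
    angAvg g₁ η < angAvg g₂ η := by
  have hπ := pi_pos
  obtain ⟨φ₀, hφ₀, ψ₀, hψ₀, hlt₀⟩ := hlt
  refine mul_lt_mul_of_pos_left ?_ (by positivity)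
  refine intervalIntegral.integral_lt_integral_of_continuousOn_of_le_of_exists_lt (by linarith)
    ((continuous_angularIntegral hg₁).comp (Continuous.prodMk_right η)).continuousOn
    ((continuous_angularIntegral hg₂).comp (Continuous.prodMk_right η)).continuousOn
    (fun ψ hψ => ?_) ⟨ψ₀, hψ₀, ?_⟩
  · refine intervalIntegral.integral_mono_on (by linarith)
      (Continuous.intervalIntegrable (by fun_prop) _ _)
      (Continuous.intervalIntegrable (by fun_prop) _ _)
      fun φ hφ => ?_
    exact mul_le_mul_of_nonneg_right (hle φ hφ ψ (Ioc_subset_Icc_self hψ))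
      (cos_nonneg_of_mem_Icc hφ)
  · refine intervalIntegral.integral_lt_integral_of_continuousOn_of_le_of_exists_lt
      (by linarith) (by fun_prop) (by fun_prop) (fun φ hφ => ?_)
      ⟨φ₀, Ioo_subset_Icc_self hφ₀, mul_lt_mul_of_pos_right hlt₀ (cos_pos_of_mem_Ioo hφ₀)⟩
    exact mul_le_mul_of_nonneg_right (hle φ (Ioc_subset_Icc_self hφ) ψ₀ hψ₀)
      (cos_nonneg_of_mem_Icc (Ioc_subset_Icc_self hφ))

theorem angAvg_congr (hη : η ∈ Icc 0 L) (hfg : EqOn f g (milneDomain L)) :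
    angAvg f η = angAvg g η := by
  have hπ := pi_pos
  unfold angAvg
  congr 1
  refine intervalIntegral.integral_congr fun ψ hψ => intervalIntegral.integral_congr fun φ hφ => ?_
  rw [uIcc_of_le (by linarith)] at hψ hφ
  rw [hfg (show (η, φ, ψ) ∈ milneDomain L from ⟨hη, hφ, hψ⟩)]

theorem continuousOn_angAvg (hf : ContinuousOn f (milneDomain L)) :
    ContinuousOn (angAvg f) (Icc 0 L) := by
  obtain ⟨g, hg, hgf⟩ := hf.exists_continuous_eqOn isCompact_milneDomain.isClosed
  exact (continuous_angAvg hg).continuousOn.congr fun η hη => angAvg_congr hη hgf.symm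

theorem angAvg_le_of_forall_le (hf : ContinuousOn f (milneDomain L)) (hη : η ∈ Icc 0 L)
    (hle : ∀ p ∈ milneDomain L, f p ≤ M) : angAvg f η ≤ M := by
  obtain ⟨g, hg, hgf⟩ := hf.exists_continuous_eqOn isCompact_milneDomain.isClosed
  rw [angAvg_congr hη hgf.symm, ← angAvg_const M η]
  exact angAvg_mono hg continuous_const fun φ hφ ψ hψ =>
    (hgf ⟨hη, hφ, hψ⟩).trans_le (hle _ ⟨hη, hφ, hψ⟩)

theorem eq_of_angAvg_eq_of_forall_le (hf : ContinuousOn f (milneDomain L)) (hη : η ∈ Icc 0 L)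
    (hle : ∀ p ∈ milneDomain L, f p ≤ M) (havg : angAvg f η = M) :
    ∀ φ ∈ Icc (-(π / 2)) (π / 2), ∀ ψ ∈ Icc (-π) π, f (η, φ, ψ) = M := by
  obtain ⟨g, hg, hgf⟩ := hf.exists_continuous_eqOn isCompact_milneDomain.isClosed
  have hgle : ∀ φ ∈ Icc (-(π / 2)) (π / 2), ∀ ψ ∈ Icc (-π) π, g (η, φ, ψ) ≤ M :=
    fun φ hφ ψ hψ => (hgf ⟨hη, hφ, hψ⟩).trans_le (hle _ ⟨hη, hφ, hψ⟩)
  have hg_eq : ∀ φ ∈ Ioo (-(π / 2)) (π / 2), ∀ ψ ∈ Icc (-π) π, g (η, φ, ψ) = M := by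
    intro φ hφ ψ hψ
    by_contra hne
    have hlt := angAvg_lt_angAvg hg continuous_const hgle
      ⟨φ, hφ, ψ, hψ, (hgle φ (Ioo_subset_Icc_self hφ) ψ hψ).lt_of_ne hne⟩
    rw [angAvg_const, ← angAvg_congr hη hgf.symm, havg] at hlt
    exact hlt.false
  intro φ hφ ψ hψ
  have hslice : EqOn (fun φ => g (η, φ, ψ)) (fun _ => M) (Icc (-(π / 2)) (π / 2)) :=
    Set.EqOn.of_subset_closure (fun φ hφ => hg_eq φ hφ ψ hψ) (by fun_prop) continuousOn_const
      Ioo_subset_Icc_self (by rw [closure_Ioo (by linarith [pi_pos])])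
  rw [← hgf ⟨hη, hφ, hψ⟩]
  exact hslice hφ

end Average

section Residual

variable {R₁ R₂ ε L : ℝ} {f : ℝ × ℝ × ℝ → ℝ} {p : ℝ × ℝ × ℝ}

/-- The partial derivatives are taken within `D`, so that this is continuous up to the boundary of
`D`, where the equation itself is not imposed. -/
def milneResidual (R₁ R₂ ε L : ℝ) (f : ℝ × ℝ × ℝ → ℝ) (p : ℝ × ℝ × ℝ) : ℝ :=
  sin p.2.1 * fderivWithin ℝ f (milneDomain L) p (1, 0, 0)
    + force R₁ R₂ ε p.1 p.2.2 * cos p.2.1 * fderivWithin ℝ f (milneDomain L) p (0, 1, 0)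
    + f p - angAvg f p.1

theorem milneResidual_pi_div_two (η ψ : ℝ) :
    milneResidual R₁ R₂ ε L f (η, π / 2, ψ) =
      fderivWithin ℝ f (milneDomain L) (η, π / 2, ψ) (1, 0, 0) + f (η, π / 2, ψ) - angAvg f η := by
  simp only [milneResidual, sin_pi_div_two, cos_pi_div_two, one_mul, mul_zero, zero_mul, add_zero]

theorem hasDerivWithinAt_eta (hf : DifferentiableWithinAt ℝ f (milneDomain L) p)
    (hp : p ∈ milneDomain L) :
    HasDerivWithinAt (fun t => f (t, p.2.1, p.2.2))
      (fderivWithin ℝ f (milneDomain L) p (1, 0, 0)) (Icc 0 L) p.1 :=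
  hf.hasFDerivWithinAt.comp_hasDerivWithinAt p.1
    ((hasDerivAt_id p.1).prodMk
      ((hasDerivAt_const _ _).prodMk (hasDerivAt_const _ _))).hasDerivWithinAt
    fun _ ht => by exact ⟨ht, hp.2⟩

theorem hasDerivWithinAt_phi (hf : DifferentiableWithinAt ℝ f (milneDomain L) p)
    (hp : p ∈ milneDomain L) :
    HasDerivWithinAt (fun t => f (p.1, t, p.2.2))
      (fderivWithin ℝ f (milneDomain L) p (0, 1, 0)) (Icc (-(π / 2)) (π / 2)) p.2.1 :=
  hf.hasFDerivWithinAt.comp_hasDerivWithinAt p.2.1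
    ((hasDerivAt_const _ _).prodMk
      ((hasDerivAt_id _).prodMk (hasDerivAt_const _ _))).hasDerivWithinAt
    fun _ ht => by exact ⟨hp.1, ht, hp.2.2⟩

theorem milneResidual_eq_of_mem_interior (hf : DifferentiableOn ℝ f (milneDomain L))
    (hp : p ∈ interior (milneDomain L)) :
    milneResidual R₁ R₂ ε L f p = sin p.2.1 * dEta f p
      + force R₁ R₂ ε p.1 p.2.2 * cos p.2.1 * dPhi f p + f p - angAvg f p.1 := by
  have hpD : p ∈ milneDomain L := interior_subset hp
  rw [interior_milneDomain] at hp
  have hη : dEta f p = fderivWithin ℝ f (milneDomain L) p (1, 0, 0) :=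
    ((hasDerivWithinAt_eta (hf p hpD) hpD).hasDerivAt (Icc_mem_nhds hp.1.1 hp.1.2)).deriv
  have hφ : dPhi f p = fderivWithin ℝ f (milneDomain L) p (0, 1, 0) :=
    ((hasDerivWithinAt_phi (hf p hpD) hpD).hasDerivAt (Icc_mem_nhds hp.2.1.1 hp.2.1.2)).deriv
  rw [hη, hφ, milneResidual]

theorem continuousOn_force (hden : ∀ η ∈ Icc 0 L, R₁ - ε * η ≠ 0 ∧ R₂ - ε * η ≠ 0) :
    ContinuousOn (fun p : ℝ × ℝ × ℝ => force R₁ R₂ ε p.1 p.2.2) (milneDomain L) := by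
  unfold force
  refine continuousOn_const.mul (ContinuousOn.add ?_ ?_)
  · exact ContinuousOn.div (by fun_prop) (by fun_prop) fun p hp => (hden p.1 hp.1).1
  · exact ContinuousOn.div (by fun_prop) (by fun_prop) fun p hp => (hden p.1 hp.1).2

theorem continuousOn_milneResidual (hL : 0 < L)
    (hden : ∀ η ∈ Icc 0 L, R₁ - ε * η ≠ 0 ∧ R₂ - ε * η ≠ 0)
    (hf : ContDiffOn ℝ 1 f (milneDomain L)) :
    ContinuousOn (milneResidual R₁ R₂ ε L f) (milneDomain L) := by
  have hf' := hf.continuousOn_fderivWithin (uniqueDiffOn_milneDomain hL) le_rfl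
  have havg : ContinuousOn (fun p : ℝ × ℝ × ℝ => angAvg f p.1) (milneDomain L) :=
    (continuousOn_angAvg hf.continuousOn).comp continuousOn_fst fun p hp => hp.1
  unfold milneResidual
  refine ((ContinuousOn.add ?_ ?_).add hf.continuousOn).sub havg
  · exact (continuous_sin.comp_continuousOn (by fun_prop)).mul
      (hf'.clm_apply continuousOn_const)
  · exact ((continuousOn_force hden).mul (continuous_cos.comp_continuousOn (by fun_prop))).mul
      (hf'.clm_apply continuousOn_const)

theorem IsMilneSolution.eqOn_milneResidual {n : ℝ} {h : ℝ → ℝ → ℝ} {S : ℝ × ℝ × ℝ → ℝ}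
    (hε : 0 < ε) (hden : ∀ η ∈ Icc 0 (layerL ε n), R₁ - ε * η ≠ 0 ∧ R₂ - ε * η ≠ 0)
    (hS : ContinuousOn S (milneDomain (layerL ε n))) (hf : IsMilneSolution R₁ R₂ ε n h S f) :
    EqOn (milneResidual R₁ R₂ ε (layerL ε n) f) S (milneDomain (layerL ε n)) := by
  have hL : 0 < layerL ε n := rpow_pos_of_pos hε _
  refine Set.EqOn.of_subset_closure (fun p hp => ?_)
    (continuousOn_milneResidual hL hden hf.smooth) hS interior_subset
    (closure_interior_milneDomain hL).ge
  rw [milneResidual_eq_of_mem_interior (hf.smooth.differentiableOn one_ne_zero) hp]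
  exact hf.eqn p hp

end Residual

section MaximumPrinciple

variable {R₁ R₂ ε L : ℝ} {f : ℝ × ℝ × ℝ → ℝ} {p : ℝ × ℝ × ℝ}

theorem mul_fderivWithin_eta_nonpos_of_isMaxOn (hp : p ∈ milneDomain L)
    (hmax : IsMaxOn f (milneDomain L) p) {η : ℝ} (hη : η ∈ Icc 0 L) :
    (η - p.1) * fderivWithin ℝ f (milneDomain L) p (1, 0, 0) ≤ 0 := by
  have h := hmax.fderivWithin_sub_nonpos convex_milneDomain hp
    (show (η, p.2.1, p.2.2) ∈ milneDomain L from ⟨hη, hp.2⟩)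
  rwa [show (η, p.2.1, p.2.2) - p = (η - p.1) • ((1 : ℝ), (0 : ℝ), (0 : ℝ)) by
    ext <;> simp, map_smul, smul_eq_mul] at h

theorem mul_fderivWithin_phi_nonpos_of_isMaxOn (hp : p ∈ milneDomain L)
    (hmax : IsMaxOn f (milneDomain L) p) {φ : ℝ} (hφ : φ ∈ Icc (-(π / 2)) (π / 2)) :
    (φ - p.2.1) * fderivWithin ℝ f (milneDomain L) p (0, 1, 0) ≤ 0 := by
  have h := hmax.fderivWithin_sub_nonpos convex_milneDomain hp
    (show (p.1, φ, p.2.2) ∈ milneDomain L from ⟨hp.1, hφ, hp.2.2⟩)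
  rwa [show (p.1, φ, p.2.2) - p = (φ - p.2.1) • ((0 : ℝ), (1 : ℝ), (0 : ℝ)) by
    ext <;> simp, map_smul, smul_eq_mul] at h

/-- The transport terms are nonnegative at a maximum where the velocity `sin φ` does not point
into `D` at an end of `[0, L]`. -/
theorem sub_angAvg_le_milneResidual_of_isMaxOn (hL : 0 < L) (hp : p ∈ milneDomain L)
    (hmax : IsMaxOn f (milneDomain L) p) (hin : p.1 = 0 → sin p.2.1 ≤ 0)
    (hout : p.1 = L → 0 ≤ sin p.2.1) :
    f p - angAvg f p.1 ≤ milneResidual R₁ R₂ ε L f p := by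
  set a := fderivWithin ℝ f (milneDomain L) p (1, 0, 0)
  set b := fderivWithin ℝ f (milneDomain L) p (0, 1, 0)
  have ha₀ := mul_fderivWithin_eta_nonpos_of_isMaxOn hp hmax ⟨le_rfl, hL.le⟩
  have haL := mul_fderivWithin_eta_nonpos_of_isMaxOn hp hmax ⟨hL.le, le_rfl⟩
  have hb₀ := mul_fderivWithin_phi_nonpos_of_isMaxOn hp hmax ⟨by linarith [pi_pos], le_rfl⟩
  have hb₁ := mul_fderivWithin_phi_nonpos_of_isMaxOn hp hmax ⟨le_rfl, by linarith [pi_pos]⟩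
  have hsin : 0 ≤ sin p.2.1 * a := by
    rcases hp.1.1.eq_or_lt with h0 | h0
    · rw [← h0] at haL
      exact mul_nonneg_of_nonpos_of_nonpos (hin h0.symm) (by nlinarith)
    rcases hp.1.2.eq_or_lt with hL' | hL'
    · rw [hL'] at ha₀
      exact mul_nonneg (hout hL') (by nlinarith)
    · rw [show a = 0 by nlinarith, mul_zero]
  have hcos : cos p.2.1 * b = 0 := by
    rcases hp.2.1.1.eq_or_lt with h | h
    · rw [← h, cos_neg, cos_pi_div_two, zero_mul]
    rcases hp.2.1.2.eq_or_lt with h' | h'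
    · rw [h', cos_pi_div_two, zero_mul]
    · rw [show b = 0 by nlinarith, mul_zero]
  have hforce : force R₁ R₂ ε p.1 p.2.2 * cos p.2.1 * b = 0 := by rw [mul_assoc, hcos, mul_zero]
  unfold milneResidual
  linarith

end MaximumPrinciple

theorem hasDerivAt_of_milneResidual_eq_zero {R₁ R₂ ε L : ℝ} {f : ℝ × ℝ × ℝ → ℝ}
    (hf : DifferentiableOn ℝ f (milneDomain L))
    (hres : ∀ p ∈ milneDomain L, milneResidual R₁ R₂ ε L f p = 0) {s : ℝ} (hs : s ∈ Ioo 0 L) :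
    HasDerivAt (fun t => f (t, π / 2, 0)) (angAvg f s - f (s, π / 2, 0)) s := by
  have hπ := pi_pos
  have hsD : (s, π / 2, (0 : ℝ)) ∈ milneDomain L :=
    ⟨Ioo_subset_Icc_self hs, ⟨by linarith, le_rfl⟩, by linarith, by linarith⟩
  have hres' := hres _ hsD
  rw [milneResidual_pi_div_two] at hres'
  exact ((hasDerivWithinAt_eta (hf _ hsD) hsD).hasDerivAt (Icc_mem_nhds hs.1 hs.2)).congr_deriv
    (by linarith)

section Solution

variable {R₁ R₂ ε n : ℝ} {h : ℝ → ℝ → ℝ} {S f : ℝ × ℝ × ℝ → ℝ}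

theorem IsMilneSolution.neg (hf : IsMilneSolution R₁ R₂ ε n h S f) :
    IsMilneSolution R₁ R₂ ε n (fun φ ψ => -h φ ψ) (fun p => -S p) (fun p => -f p) where
  smooth := hf.smooth.neg
  eqn p hp := by
    have hη : dEta (fun p => -f p) p = -dEta f p := deriv.neg
    have hφ : dPhi (fun p => -f p) p = -dPhi f p := deriv.neg
    have havg : angAvg (fun p => -f p) p.1 = -angAvg f p.1 := by
      simp only [angAvg, neg_mul, intervalIntegral.integral_neg, mul_neg]
    rw [hη, hφ, havg, ← hf.eqn p hp]
    ring
  inflow q hq := by simp only [hf.inflow q hq]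
  reflect φ ψ := by simp only [hf.reflect φ ψ]

theorem IsMilneSolution.exists_isMaxOn (hε : 0 < ε) (hf : IsMilneSolution R₁ R₂ ε n h S f) :
    ∃ p ∈ milneDomain (layerL ε n), IsMaxOn f (milneDomain (layerL ε n)) p ∧
      (p.1 = layerL ε n → 0 ≤ p.2.1) := by
  set L := layerL ε n
  have hπ := pi_pos
  have hne : (milneDomain L).Nonempty :=
    ⟨(0, 0, 0), ⟨le_rfl, (rpow_pos_of_pos hε _).le⟩, ⟨by linarith, by linarith⟩, by linarith,
      by linarith⟩
  obtain ⟨p, hp, hmax⟩ := isCompact_milneDomain.exists_isMaxOn hne hf.smooth.continuousOn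
  by_cases hflip : p.1 = L ∧ p.2.1 < 0
  · have hfp : f (L, -p.2.1, p.2.2) = f p :=
      (hf.reflect _ _).symm.trans (congrArg f (Prod.ext hflip.1.symm rfl))
    refine ⟨(L, -p.2.1, p.2.2), ⟨⟨?_, le_rfl⟩, ⟨?_, ?_⟩, hp.2.2⟩, ?_, fun _ => ?_⟩
    · exact hflip.1 ▸ hp.1.1
    · linarith [hp.2.1.2]
    · linarith [hp.2.1.1]
    · exact isMaxOn_iff.2 fun x hx => (isMaxOn_iff.1 hmax x hx).trans_eq hfp.symm
    · linarith [hflip.2]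
  · exact ⟨p, hp, hmax, fun hpL => not_lt.1 fun hφ => hflip ⟨hpL, hφ⟩⟩

theorem IsMilneSolution.nonpos (hε : 0 < ε)
    (hden : ∀ η ∈ Icc 0 (layerL ε n), R₁ - ε * η ≠ 0 ∧ R₂ - ε * η ≠ 0)
    (hf : IsMilneSolution R₁ R₂ ε n (fun _ _ => 0) (fun _ => 0) f) :
    ∀ p ∈ milneDomain (layerL ε n), f p ≤ 0 := by
  set L := layerL ε n
  have hπ := pi_pos
  have hL : 0 < L := rpow_pos_of_pos hε _
  have hfc := hf.smooth.continuousOn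
  have hres : ∀ p ∈ milneDomain L, milneResidual R₁ R₂ ε L f p = 0 :=
    hf.eqOn_milneResidual hε hden continuousOn_const
  obtain ⟨p, hp, hmax, hpL⟩ := hf.exists_isMaxOn hε
  by_contra! ⟨q, hq, hfq⟩
  have hM : 0 < f p := hfq.trans_le (hmax hq)
  have hle : ∀ x ∈ milneDomain L, f x ≤ f p := fun x hx => hmax hx
  have hin : p.1 = 0 → sin p.2.1 ≤ 0 := fun h0 => not_lt.1 fun hsin => hM.ne' <|
    (congrArg f (Prod.ext h0 rfl : p = (0, p.2.1, p.2.2))).trans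
      (hf.inflow (p.2.1, p.2.2) ⟨hsin, hp.2⟩)
  have hout : p.1 = L → 0 ≤ sin p.2.1 := fun hpL' =>
    sin_nonneg_of_nonneg_of_le_pi (hpL hpL') (by linarith [hp.2.1.2])
  have havg : angAvg f p.1 = f p := le_antisymm (angAvg_le_of_forall_le hfc hp.1 hle) <| by
    linarith [hres p hp,
      sub_angAvg_le_milneResidual_of_isMaxOn (R₁ := R₁) (R₂ := R₂) (ε := ε) hL hp hmax hin hout]
  have htop : f (p.1, π / 2, 0) = f p := eq_of_angAvg_eq_of_forall_le hfc hp.1 hle havg _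
    ⟨by linarith, le_rfl⟩ _ ⟨by linarith, by linarith⟩
  have hbottom : f (0, π / 2, 0) = 0 := hf.inflow (π / 2, 0)
    ⟨by rw [sin_pi_div_two]; norm_num, ⟨by linarith, le_rfl⟩, by linarith, by linarith⟩
  have hlt := lt_of_hasDerivAt_le_sub (u := fun s => f (s, π / 2, 0)) (M := f p)
    (hfc.comp (by fun_prop) fun s hs => ⟨hs, ⟨by linarith, le_rfl⟩, by linarith, by linarith⟩)
    (fun s hs => hasDerivAt_of_milneResidual_eq_zero (hf.smooth.differentiableOn one_ne_zero)
      hres hs)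
    (fun s hs => by linarith [angAvg_le_of_forall_le hfc (Ioo_subset_Icc_self hs) hle])
    (hbottom.trans_lt hM)
  exact (hlt p.1 hp.1).ne htop

end Solution

theorem exists_mul_layerL_lt {n R : ℝ} (hn : n < 1) (hR : 0 < R) :
    ∃ ε₀ ∈ Ioo (0 : ℝ) 1, ∀ ε ∈ Ioc 0 ε₀, ε * layerL ε n < R := by
  have hn' : 0 < 1 - n := by linarith
  set ε₀ := min (1 / 2) (R ^ (1 - n)⁻¹ / 2)
  have hε₀ : 0 < ε₀ := lt_min (by norm_num) (by positivity)
  refine ⟨ε₀, ⟨hε₀, (min_le_left _ _).trans_lt (by norm_num)⟩, fun ε hε => ?_⟩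
  calc ε * layerL ε n = ε ^ (1 - n) := by rw [layerL, sub_eq_add_neg, rpow_add hε.1, rpow_one]
    _ < (R ^ (1 - n)⁻¹) ^ (1 - n) := rpow_lt_rpow hε.1.le
        (hε.2.trans_lt ((min_le_right _ _).trans_lt (half_lt_self (by positivity)))) hn'
    _ = R := by rw [← rpow_mul hR.le, inv_mul_cancel₀ hn'.ne', rpow_one]

/-- uniqueness part of Theorem "Milne theorem 1": the only classical
solution with zero in-flow data and zero source is the zero function on `D`. -/
theorem milne_uniqueness (R₁ R₂ n : ℝ) (hR₁ : 0 < R₁) (hR₂ : 0 < R₂)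
    (hn : n ∈ Ioo (0 : ℝ) (1 / 2)) :
    ∃ ε₀ ∈ Ioo (0 : ℝ) 1, ∀ ε ∈ Ioc (0 : ℝ) ε₀, ∀ f : ℝ × ℝ × ℝ → ℝ,
      IsMilneSolution R₁ R₂ ε n (fun _ _ => 0) (fun _ => 0) f →
      ∀ p ∈ milneDomain (layerL ε n), f p = 0 := by
  obtain ⟨ε₀, hε₀, hsmall⟩ :=
    exists_mul_layerL_lt (show n < 1 by linarith [hn.2]) (lt_min hR₁ hR₂)
  refine ⟨ε₀, hε₀, fun ε hε f hf p hp => ?_⟩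
  have hden : ∀ η ∈ Icc 0 (layerL ε n), R₁ - ε * η ≠ 0 ∧ R₂ - ε * η ≠ 0 := fun η hη => by
    have hεη : ε * η < min R₁ R₂ :=
      (mul_le_mul_of_nonneg_left hη.2 hε.1.le).trans_lt (hsmall ε hε)
    exact ⟨by linarith [min_le_left R₁ R₂], by linarith [min_le_right R₁ R₂]⟩
  have hneg := hf.neg
  simp only [neg_zero] at hneg
  linarith [hf.nonpos hε.1 hden p hp, hneg.nonpos hε.1 hden p hp]

end MilneStmt
end
end

section
/- Comparison of angles along a characteristic: There exists C > 0, depending only on R₁ and R₂, such that for all ε ∈ (0,1), all 0 ≤ η′ ≤ η with εη ≤ min(R₁,R₂)/2, all ψ ∈ ℝ and all φ ∈ [0, π/2], the angle φ′ ∈ [0, π/2] defined by cos φ′ = e^{V(η′,ψ) − V(η,ψ)} cos φ (well defined, since V(·,ψ) is nondecreasing so that e^{V(η′,ψ) − V(η,ψ)} cos φ ∈ [0,1]) satisfies sin φ ≤ sin φ′ ≤ √(sin²φ + C ε (η − η′)). -/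
/-!
Writing `W = V(η,ψ) - V(η',ψ)`, the defining relation reads `cos φ' = e^{-W} cos φ`, so
`sin² φ' = sin² φ + (1 - e^{-2W}) cos² φ`. Since `V(·,ψ)` is a convex combination of the
increasing functions `x ↦ log (R / (R - εx))`, whose slopes are at most `2ε/R` while `εx ≤ R/2`,
we get `0 ≤ W ≤ (2/R₁ + 2/R₂) ε (η - η')`; then `0 ≤ 1 - e^{-2W} ≤ 2W` gives both bounds.
-/

noncomputable section

open Real Set MeasureTheory

namespace MilneStmt

/-- The potential `V(η,ψ)`, with `V(0,ψ) = 0` and `∂V/∂η = -F(η,ψ)`. -/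
def potential (R₁ R₂ ε η ψ : ℝ) : ℝ :=
  Real.sin ψ ^ 2 * Real.log (R₁ / (R₁ - ε * η))
    + Real.cos ψ ^ 2 * Real.log (R₂ / (R₂ - ε * η))

/-- The weight `ζ(η,φ,ψ) = (1 - e^{-2V(η,ψ)} cos²φ)^{1/2}`. -/
def zetaWeight (R₁ R₂ ε : ℝ) (p : ℝ × ℝ × ℝ) : ℝ :=
  Real.sqrt (1 - Real.exp (-2 * potential R₁ R₂ ε p.1 p.2.2) * Real.cos p.2.1 ^ 2)

lemma log_div_sub_sub_log_div_sub_mem_Icc {R a b : ℝ} (hR : 0 < R) (hab : a ≤ b) (hb : b < R) :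
    log (R / (R - b)) - log (R / (R - a)) ∈ Icc 0 ((b - a) / (R - b)) := by
  have hRb : 0 < R - b := by linarith
  have hRa : 0 < R - a := by linarith
  have hlog : log (R / (R - b)) - log (R / (R - a)) = log ((R - a) / (R - b)) := by
    rw [log_div hR.ne' hRb.ne', log_div hR.ne' hRa.ne', log_div hRa.ne' hRb.ne']
    ring
  rw [hlog]
  constructor
  · exact log_nonneg ((one_le_div hRb).mpr (by linarith))
  · calc log ((R - a) / (R - b)) ≤ (R - a) / (R - b) - 1 := log_le_sub_one_of_pos (by positivity)
      _ = (b - a) / (R - b) := by field_simp; ring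

lemma potential_sub_mem_Icc {R₁ R₂ ε η' η : ℝ} (ψ : ℝ) (hR₁ : 0 < R₁) (hR₂ : 0 < R₂)
    (hε : 0 ≤ ε) (hη' : η' ≤ η) (hη : ε * η ≤ min R₁ R₂ / 2) :
    potential R₁ R₂ ε η ψ - potential R₁ R₂ ε η' ψ
      ∈ Icc 0 ((2 / R₁ + 2 / R₂) * ε * (η - η')) := by
  have hεη : ε * η' ≤ ε * η := mul_le_mul_of_nonneg_left hη' hε
  have hslope {R : ℝ} (hR : 0 < R) (hηR : ε * η ≤ R / 2) :
      log (R / (R - ε * η)) - log (R / (R - ε * η'))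
        ∈ Icc 0 (2 / R * (ε * η - ε * η')) := by
    obtain ⟨hlo, hhi⟩ := log_div_sub_sub_log_div_sub_mem_Icc hR hεη (by linarith)
    refine ⟨hlo, hhi.trans ?_⟩
    rw [div_mul_eq_mul_div, div_le_div_iff₀ (by linarith) hR]
    nlinarith
  obtain ⟨h₁, h₁'⟩ := hslope hR₁ (hη.trans (by gcongr; exact min_le_left _ _))
  obtain ⟨h₂, h₂'⟩ := hslope hR₂ (hη.trans (by gcongr; exact min_le_right _ _))
  have hsplit : potential R₁ R₂ ε η ψ - potential R₁ R₂ ε η' ψ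
      = sin ψ ^ 2 * (log (R₁ / (R₁ - ε * η)) - log (R₁ / (R₁ - ε * η')))
        + cos ψ ^ 2 * (log (R₂ / (R₂ - ε * η)) - log (R₂ / (R₂ - ε * η'))) := by
    unfold potential; ring
  rw [hsplit]
  constructor
  · positivity
  · have hs := mul_le_of_le_one_left h₁ (sin_sq_le_one ψ)
    have hc := mul_le_of_le_one_left h₂ (cos_sq_le_one ψ)
    linarith

lemma one_sub_exp_neg_sq_le (x : ℝ) : 1 - exp (-x) ^ 2 ≤ 2 * x := by
  rw [← exp_nat_mul, Nat.cast_ofNat, mul_neg]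
  linarith [one_sub_le_exp_neg (2 * x)]

section CosEqMul

variable {φ φ' t : ℝ}

lemma sin_sq_eq_of_cos_eq_mul (h : cos φ' = t * cos φ) :
    sin φ' ^ 2 = sin φ ^ 2 + (1 - t ^ 2) * cos φ ^ 2 := by
  rw [sin_sq, sin_sq, h]
  ring

lemma sin_le_sin_of_cos_eq_mul (h : cos φ' = t * cos φ) (ht : t ^ 2 ≤ 1) (hφ' : 0 ≤ sin φ') :
    sin φ ≤ sin φ' := by
  refine le_of_sq_le_sq ?_ hφ'
  rw [sin_sq_eq_of_cos_eq_mul h]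
  nlinarith [sq_nonneg (cos φ)]

lemma sin_le_sqrt_of_cos_eq_mul (h : cos φ' = t * cos φ) (ht : t ^ 2 ≤ 1) :
    sin φ' ≤ √(sin φ ^ 2 + (1 - t ^ 2)) := by
  refine Real.le_sqrt_of_sq_le ?_
  rw [sin_sq_eq_of_cos_eq_mul h]
  nlinarith [cos_sq_le_one φ]

end CosEqMul

/-- comparison of angles along a characteristic. -/
theorem angle_comparison_along_characteristic (R₁ R₂ : ℝ) (hR₁ : 0 < R₁) (hR₂ : 0 < R₂) :
    ∃ C > (0 : ℝ),
      ∀ ε ∈ Ioo (0 : ℝ) 1, ∀ η' η : ℝ, 0 ≤ η' → η' ≤ η → ε * η ≤ min R₁ R₂ / 2 →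
        ∀ ψ : ℝ, ∀ φ ∈ Icc (0 : ℝ) (π / 2), ∀ φ' ∈ Icc (0 : ℝ) (π / 2),
          Real.cos φ'
              = Real.exp (potential R₁ R₂ ε η' ψ - potential R₁ R₂ ε η ψ) * Real.cos φ →
          Real.sin φ ≤ Real.sin φ' ∧
          Real.sin φ' ≤ Real.sqrt (Real.sin φ ^ 2 + C * ε * (η - η')) := by
  refine ⟨2 * (2 / R₁ + 2 / R₂), by positivity, ?_⟩
  rintro ε ⟨hε, -⟩ η' η - hη' hη ψ φ - φ' ⟨hφ'₀, hφ'₁⟩ hcos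
  obtain ⟨hW₀, hW⟩ := potential_sub_mem_Icc ψ hR₁ hR₂ hε.le hη' hη
  set W := potential R₁ R₂ ε η ψ - potential R₁ R₂ ε η' ψ
  have hcos' : cos φ' = exp (-W) * cos φ := by rw [hcos, neg_sub]
  have ht : exp (-W) ^ 2 ≤ 1 := pow_le_one₀ (exp_pos _).le (exp_le_one_iff.mpr (by linarith))
  have hsin' : 0 ≤ sin φ' := sin_nonneg_of_nonneg_of_le_pi hφ'₀ (by linarith [pi_pos])
  refine ⟨sin_le_sin_of_cos_eq_mul hcos' ht hsin', ?_⟩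
  calc sin φ' ≤ √(sin φ ^ 2 + (1 - exp (-W) ^ 2)) := sin_le_sqrt_of_cos_eq_mul hcos' ht
    _ ≤ √(sin φ ^ 2 + 2 * (2 / R₁ + 2 / R₂) * ε * (η - η')) := by
      gcongr
      linarith [one_sub_exp_neg_sq_le W]

end MilneStmt
end
end
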